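/- An object f : A ⟶ B of the arrow category Arr(Cat) (that is, a functor between small categories) is injective with respect to the morphism of Arr(Cat) from (the unique functor ∅ ⟶ {•}) to (the functor {•} ⟶ I selecting the object 0 of the walking isomorphism I), with bottom component {•} ⟶ I selecting the object 1, if and only if f is essentially surjective: for every object b of B there exist an object a of A and an isomorphism f(a) ≅ b. -/

import Mathlib

open CategoryTheory

/-- The walking isomorphism: the codiscrete (chaotic) category on two objects. -/
abbrev WalkingIsoCat : Cat.{0, 0} := Cat.of (Codiscrete (Fin 2))

/-- The functor from the terminal category selecting the object `0` of the walking
isomorphism. -/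
def selectZero : Cat.of (Discrete PUnit) ⟶ WalkingIsoCat :=
  Functor.toCatHom ((Functor.const (Discrete PUnit)).obj ⟨0⟩)

/-- The functor from the terminal category selecting the object `1` of the walking
isomorphism. -/
def selectOne : Cat.of (Discrete PUnit) ⟶ WalkingIsoCat :=
  Functor.toCatHom ((Functor.const (Discrete PUnit)).obj ⟨1⟩)

/-- The unique functor from the empty category to the terminal category, as a morphism of
`Cat`. -/
def emptyToPoint : Cat.of (Discrete PEmpty) ⟶ Cat.of (Discrete PUnit) :=
  Functor.toCatHom (Functor.empty _)

/-- The square in the arrow category of `Cat` from `∅ ⟶ {•}` to `{•} ⟶ I` (selecting `0`),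
whose bottom component selects the object `1` of the walking isomorphism `I`. -/
def essSurjSquare : Arrow.mk emptyToPoint ⟶ Arrow.mk selectZero :=
  Arrow.homMk' (u := Functor.toCatHom (Functor.empty _)) (v := selectOne)
    (Cat.Hom.ext (Functor.empty_ext' _ _))

/-- A functor `F : A ⟶ B` between small categories, as an object of the arrow
category of `Cat`, is injective with respect to the square `essSurjSquare` iff it is essentially
surjective: every object of `B` is isomorphic to the image of an object of `A`. -/
theorem injective_wrt_essSurjSquare_iff_essSurj {A B : Type} [SmallCategory A]
    [SmallCategory B] (F : A ⥤ B) :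
    (∀ sq : Arrow.mk emptyToPoint ⟶ Arrow.mk (show Cat.of A ⟶ Cat.of B from F.toCatHom),
        ∃ t : Arrow.mk selectZero ⟶ Arrow.mk (show Cat.of A ⟶ Cat.of B from F.toCatHom),
          essSurjSquare ≫ t = sq) ↔
      ∀ b : B, ∃ a : A, Nonempty (F.obj a ≅ b) := by
  constructor
  · intro h b
    obtain ⟨t, ht⟩ := h (Arrow.homMk' (u := Functor.toCatHom (Functor.empty _))
      (v := ((Functor.const (Discrete PUnit)).obj b).toCatHom) (Cat.Hom.ext (Functor.empty_ext' _ _)))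
    refine ⟨t.left.toFunctor.obj ⟨⟨⟩⟩, ⟨?_⟩⟩
    have h1 : F.obj (t.left.toFunctor.obj ⟨⟨⟩⟩) = t.right.toFunctor.obj ⟨0⟩ :=
      Functor.congr_obj (congrArg Cat.Hom.toFunctor (Arrow.w t)) ⟨⟨⟩⟩
    have h2 : t.right.toFunctor.obj ⟨1⟩ = b :=
      Functor.congr_obj (congrArg Cat.Hom.toFunctor (congrArg CommaMorphism.right ht)) ⟨⟨⟩⟩
    have e : t.right.toFunctor.obj ⟨0⟩ ≅ t.right.toFunctor.obj ⟨1⟩ :=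
      { hom := t.right.toFunctor.map ⟨⟩
        inv := t.right.toFunctor.map ⟨⟩
        hom_inv_id := (t.right.toFunctor.map_comp (X := (⟨0⟩ : Codiscrete (Fin 2))) (Y := (⟨1⟩ : Codiscrete (Fin 2))) (Z := (⟨0⟩ : Codiscrete (Fin 2))) ⟨⟩ ⟨⟩).symm.trans (t.right.toFunctor.map_id _)
        inv_hom_id := (t.right.toFunctor.map_comp (X := (⟨1⟩ : Codiscrete (Fin 2))) (Y := (⟨0⟩ : Codiscrete (Fin 2))) (Z := (⟨1⟩ : Codiscrete (Fin 2))) ⟨⟩ ⟨⟩).symm.trans (t.right.toFunctor.map_id _) }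
    exact eqToIso h1 ≪≫ e ≪≫ eqToIso h2
  · intro h sq
    set b : B := sq.right.toFunctor.obj ⟨⟨⟩⟩ with hb
    obtain ⟨a, ⟨e⟩⟩ := h b
    let ι : Fin 2 → (B) := fun i => if i = 0 then F.obj a else b
    let κ : ∀ i, F.obj a ≅ ι i := fun i => by
      by_cases hi : i = 0
      · exact eqToIso (by simp [ι, hi])
      · exact e ≪≫ eqToIso (by simp [ι, hi])
    let R : WalkingIsoCat ⥤ B :=
      { obj := fun x => ι x.as
        map := fun {x y} _ => (κ x.as).inv ≫ (κ y.as).hom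
        map_id := by intros; simp
        map_comp := by intros; simp }
    have hR0 : R.obj ⟨0⟩ = F.obj a := by simp [R, ι]
    have hR1 : R.obj ⟨1⟩ = b := by simp [R, ι]
    have hκ0 : (κ (0 : Fin 2)).hom = eqToHom (by simp [ι]) := by simp [κ]
    refine ⟨Arrow.homMk' (u := ((Functor.const (Discrete PUnit)).obj a).toCatHom) (v := R.toCatHom) (Cat.Hom.ext ?_), ?_⟩
    · show (Functor.const (Discrete PUnit)).obj a ⋙ F = selectZero.toFunctor ⋙ R
      apply CategoryTheory.Functor.ext
      · intro X Y f
        obtain ⟨⟨⟩⟩ := X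
        obtain ⟨⟨⟩⟩ := Y
        obtain rfl : f = 𝟙 _ := rfl
        erw [CategoryTheory.Functor.map_id, CategoryTheory.Functor.map_id]
        simp
      · intro X
        exact hR0.symm
    · apply CommaMorphism.ext
      · exact Cat.Hom.ext (Functor.empty_ext' _ _)
      · apply Cat.Hom.ext
        show selectOne.toFunctor ⋙ R = sq.right.toFunctor
        apply CategoryTheory.Functor.ext
        · intro X Y f
          obtain ⟨⟨⟩⟩ := X
          obtain ⟨⟨⟩⟩ := Y
          obtain rfl : f = 𝟙 _ := rfl
          erw [CategoryTheory.Functor.map_id, CategoryTheory.Functor.map_id]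
          simp
        · intro X
          obtain ⟨⟨⟩⟩ := X
          exact hR1
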